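/- (Uniqueness of Lipschitz flows.) Let ψ be a Lipschitz flow and let χ be a flow (a family χ=(χ_{t,s})_{(s,t)∈𝕋₊²} of maps V→V, not necessarily continuous in (s,t) nor Lipschitz, with χ_{t,t}(a)=a and χ_{t,s}∘χ_{s,r}=χ_{t,r}) satisfying N(χ_{t,s}(a)) ≤ (1+δ_T)·N(a) for all (s,t) ∈ 𝕋₊² and a ∈ V. Assume ψ ∼ χ (same galaxy) and that T is small enough that there exists λ with 1/(1−log₂κ) < λ < 1 and κ_λ(2+3δ_T+δ_T²) < 2. Then χ = ψ, i.e. χ_{t,s}(a) = ψ_{t,s}(a) for all (s,t) ∈ 𝕋₊² and a ∈ V. -/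

import Mathlib

open Set

noncomputable section

/-- Composition of a two-parameter family of maps along a list of intermediate times:
`compAlong φ s [u₁,…,u_k] t = φ_{t,u_k} ∘ ⋯ ∘ φ_{u₂,u₁} ∘ φ_{u₁,s}`. -/
def compAlong {V : Type*} (φ : ℝ → ℝ → V → V) : ℝ → List ℝ → ℝ → V → V
  | s, [], t => φ t s
  | s, u :: us, t => compAlong φ u us t ∘ φ u s

/-- The iterated (almost) flow `φ^π_{t,s}`: the composition of `φ` along the
points of the partition `π` lying strictly between `s` and `t`. -/
def iterFlow {V : Type*} (φ : ℝ → ℝ → V → V) (π : List ℝ) (t s : ℝ) : V → V :=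
  compAlong φ s (π.filter fun u => decide (s < u) && decide (u < t)) t

/-- A partition of `[0,T]`, as a strictly increasing list of points containing `0` and `T`. -/
structure ListPartition (T : ℝ) where
  points : List ℝ
  sorted : points.Pairwise (· < ·)
  zero_mem : 0 ∈ points
  top_mem : T ∈ points
  mem_Icc : ∀ u ∈ points, u ∈ Set.Icc 0 T

/-- The mesh of a partition: the largest gap between successive points. -/
def ListPartition.mesh {T : ℝ} (π : ListPartition T) : ℝ :=
  ((π.points.zip π.points.tail).map fun p => p.2 - p.1).foldr max 0

/-- A control: a super-additive family `ω` vanishing on the diagonal and small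
near the diagonal. -/
structure IsControl (T : ℝ) (ω : ℝ → ℝ → ℝ) : Prop where
  nonneg : ∀ ⦃s t : ℝ⦄, 0 ≤ s → s ≤ t → t ≤ T → 0 ≤ ω s t
  superadd : ∀ ⦃r s t : ℝ⦄, 0 ≤ r → r ≤ s → s ≤ t → t ≤ T → ω r s + ω s t ≤ ω r t
  diag : ∀ ⦃s : ℝ⦄, 0 ≤ s → s ≤ T → ω s s = 0
  small : ∀ ε > (0:ℝ), ∃ h > (0:ℝ), ∀ ⦃s t : ℝ⦄, 0 ≤ s → s ≤ t → t ≤ T → t - s ≤ h → ω s t < ε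

/-- A remainder: a continuous increasing function `ϖ` with `2ϖ(x/2) ≤ κϖ(x)`. -/
structure IsRemainder (κ : ℝ) (ϖ : ℝ → ℝ) : Prop where
  contOn : ContinuousOn ϖ (Set.Ici 0)
  strictMonoOn : StrictMonoOn ϖ (Set.Ici 0)
  nonneg : ∀ x, 0 ≤ x → 0 ≤ ϖ x
  doubling : ∀ x, 0 < x → 2 * ϖ (x / 2) ≤ κ * ϖ x

/-- An almost flow on `[0,T]` with data `(ω, ϖ, N, γ, δT, η)`. -/
structure IsAlmostFlow {V : Type*} [MetricSpace V] (T : ℝ) (ω : ℝ → ℝ → ℝ)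
    (ϖ : ℝ → ℝ) (N : V → ℝ) (γ δT : ℝ) (η : ℝ → ℝ) (φ : ℝ → ℝ → V → V) : Prop where
  cont : ∀ a : V, ContinuousOn (fun p : ℝ × ℝ => φ p.2 p.1 a)
    {p : ℝ × ℝ | 0 ≤ p.1 ∧ p.1 ≤ p.2 ∧ p.2 ≤ T}
  flow_id : ∀ ⦃t : ℝ⦄, 0 ≤ t → t ≤ T → ∀ a, φ t t a = a
  close : ∀ ⦃s t : ℝ⦄, 0 ≤ s → s ≤ t → t ≤ T → ∀ a, dist (φ t s a) a ≤ δT * N a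
  lip : ∀ ⦃s t : ℝ⦄, 0 ≤ s → s ≤ t → t ≤ T → ∀ a b,
    dist (φ t s a) (φ t s b) ≤ (1 + δT) * dist a b + η (ω s t) * dist a b ^ γ
  almost : ∀ ⦃r s t : ℝ⦄, 0 ≤ r → r ≤ s → s ≤ t → t ≤ T → ∀ a,
    dist (φ t s (φ s r a)) (φ t r a) ≤ N a * ϖ (ω r t)


/-- An almost flow with `γ = 1` and `N` Lipschitz. -/
structure IsAlmostFlowOne {V : Type*} [MetricSpace V] (T : ℝ) (ω : ℝ → ℝ → ℝ)
    (ϖ : ℝ → ℝ) (N : V → ℝ) (δT : ℝ) (η : ℝ → ℝ) (φ : ℝ → ℝ → V → V) : Prop where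
  cont : ∀ a : V, ContinuousOn (fun p : ℝ × ℝ => φ p.2 p.1 a)
    {p : ℝ × ℝ | 0 ≤ p.1 ∧ p.1 ≤ p.2 ∧ p.2 ≤ T}
  flow_id : ∀ ⦃t : ℝ⦄, 0 ≤ t → t ≤ T → ∀ a, φ t t a = a
  close : ∀ ⦃s t : ℝ⦄, 0 ≤ s → s ≤ t → t ≤ T → ∀ a, dist (φ t s a) a ≤ δT * N a
  lip : ∀ ⦃s t : ℝ⦄, 0 ≤ s → s ≤ t → t ≤ T → ∀ a b,
    dist (φ t s a) (φ t s b) ≤ (1 + δT) * dist a b + η (ω s t) * dist a b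
  almost : ∀ ⦃r s t : ℝ⦄, 0 ≤ r → r ≤ s → s ≤ t → t ≤ T → ∀ a,
    dist (φ t s (φ s r a)) (φ t r a) ≤ N a * ϖ (ω r t)

/-- `Θ(π) = sup ϖ(ω_{s,s'})^{1-λ}` over successive points `s < s'` of `π`. -/
def Theta {T : ℝ} (ω : ℝ → ℝ → ℝ) (ϖ : ℝ → ℝ) (lam : ℝ) (π : ListPartition T) : ℝ :=
  ((π.points.zip π.points.tail).map fun p => ϖ (ω p.1 p.2) ^ (1 - lam)).foldr max 0

/-- Theorem 8: uniqueness of Lipschitz flows in a galaxy.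
If `ψ` is a Lipschitz flow and `χ` is a flow (not necessarily continuous nor Lipschitz)
with `N(χ_{t,s}(a)) ≤ (1+δ_T)·N(a)`, lying in the same galaxy as `ψ`, then `χ = ψ`. -/
theorem statement12 {V : Type*} [MetricSpace V]
    (T : ℝ) (hT : 0 < T)
    (ω : ℝ → ℝ → ℝ) (hω : IsControl T ω)
    (κ : ℝ) (hκ : κ ∈ Set.Ioo (0:ℝ) 1)
    (ϖ : ℝ → ℝ) (hϖ : IsRemainder κ ϖ)
    (N : V → ℝ) (hN1 : ∀ a, 1 ≤ N a)
    (CN : NNReal) (hNlip : LipschitzWith CN N)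
    (δT : ℝ) (hδT : 0 ≤ δT)
    (lam : ℝ) (hlam1 : 1 / (1 - Real.logb 2 κ) < lam) (hlam2 : lam < 1)
    (hlam3 : (2:ℝ) ^ (1 - lam) * κ ^ lam * (2 + 3 * δT + δT ^ 2) < 2)
    (ψ : ℝ → ℝ → V → V)
    (hψcont : ∀ a : V, ContinuousOn (fun p : ℝ × ℝ => ψ p.2 p.1 a)
      {p : ℝ × ℝ | 0 ≤ p.1 ∧ p.1 ≤ p.2 ∧ p.2 ≤ T})
    (hψid : ∀ ⦃t : ℝ⦄, 0 ≤ t → t ≤ T → ∀ a : V, ψ t t a = a)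
    (hψflow : ∀ ⦃r s t : ℝ⦄, 0 ≤ r → r ≤ s → s ≤ t → t ≤ T → ∀ a : V,
      ψ t s (ψ s r a) = ψ t r a)
    (hψlip : ∀ ⦃s t : ℝ⦄, 0 ≤ s → s ≤ t → t ≤ T → ∀ a b : V,
      dist (ψ t s a) (ψ t s b) ≤ (1 + δT) * dist a b)
    (χ : ℝ → ℝ → V → V)
    (hχid : ∀ ⦃t : ℝ⦄, 0 ≤ t → t ≤ T → ∀ a : V, χ t t a = a)
    (hχflow : ∀ ⦃r s t : ℝ⦄, 0 ≤ r → r ≤ s → s ≤ t → t ≤ T → ∀ a : V,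
      χ t s (χ s r a) = χ t r a)
    (hχN : ∀ ⦃s t : ℝ⦄, 0 ≤ s → s ≤ t → t ≤ T → ∀ a : V,
      N (χ t s a) ≤ (1 + δT) * N a)
    (C : ℝ)
    (hgalaxy : ∀ ⦃s t : ℝ⦄, 0 ≤ s → s ≤ t → t ≤ T → ∀ a : V,
      dist (ψ t s a) (χ t s a) ≤ C * N a * ϖ (ω s t)) :
    ∀ ⦃s t : ℝ⦄, 0 ≤ s → s ≤ t → t ≤ T → ∀ a : V, χ t s a = ψ t s a := by
  intro s₀ t₀ hs₀ hst₀ ht₀ a₀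
  haveI : Nonempty V := ⟨a₀⟩
  obtain ⟨hκ0, hκ1⟩ := hκ
  -- lam > 0
  have hlog : Real.logb 2 κ < 0 := Real.logb_neg one_lt_two hκ0 hκ1
  have hlam0 : 0 < lam := lt_trans (div_pos one_pos (by linarith)) hlam1
  -- ϖ 0 = 0
  have hϖ0 : ϖ 0 = 0 := by
    have hc : Filter.Tendsto ϖ (nhdsWithin 0 (Set.Ioi 0)) (nhds (ϖ 0)) :=
      ((hϖ.contOn 0 Set.self_mem_Ici).tendsto).mono_left
        (nhdsWithin_mono 0 Set.Ioi_subset_Ici_self)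
    have hhalf : Filter.Tendsto (fun x : ℝ => x / 2) (nhdsWithin 0 (Set.Ioi 0))
        (nhdsWithin 0 (Set.Ioi 0)) := by
      apply tendsto_nhdsWithin_of_tendsto_nhds_of_eventually_within
      · have h0 : Filter.Tendsto (fun x : ℝ => x / 2) (nhds (0:ℝ)) (nhds ((0:ℝ) / 2)) :=
          Filter.Tendsto.div_const Filter.tendsto_id 2
        simpa using h0.mono_left nhdsWithin_le_nhds
      · filter_upwards [self_mem_nhdsWithin] with x hx
        exact div_pos hx (two_pos : (0:ℝ) < 2)
    have h2 : Filter.Tendsto (fun x => 2 * ϖ (x / 2)) (nhdsWithin 0 (Set.Ioi 0))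
        (nhds (2 * ϖ 0)) := (hc.comp hhalf).const_mul 2
    have h3 : Filter.Tendsto (fun x => κ * ϖ x) (nhdsWithin 0 (Set.Ioi 0))
        (nhds (κ * ϖ 0)) := hc.const_mul κ
    have hle : 2 * ϖ 0 ≤ κ * ϖ 0 := by
      refine le_of_tendsto_of_tendsto h2 h3 ?_
      filter_upwards [self_mem_nhdsWithin] with x hx
      exact hϖ.doubling x hx
    have h00 := hϖ.nonneg 0 le_rfl
    nlinarith
  -- small values of ϖ
  have hϖsmall : ∀ c > (0:ℝ), ∃ ε > (0:ℝ), ϖ ε < c := by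
    intro c hc
    have hc' : Filter.Tendsto ϖ (nhdsWithin 0 (Set.Ioi 0)) (nhds 0) := by
      have h := ((hϖ.contOn 0 Set.self_mem_Ici).tendsto).mono_left
        (nhdsWithin_mono (0:ℝ) Set.Ioi_subset_Ici_self)
      rwa [hϖ0] at h
    have hev : ∀ᶠ x in nhdsWithin 0 (Set.Ioi 0), ϖ x < c :=
      hc'.eventually (eventually_lt_nhds hc)
    obtain ⟨x, hx1, hx2⟩ := (hev.and self_mem_nhdsWithin).exists
    exact ⟨x, hx2, hx1⟩
  have hϖmono : MonotoneOn ϖ (Set.Ici 0) := hϖ.strictMonoOn.monotoneOn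
  have hϖpos : ∀ x, 0 < x → 0 < ϖ x := fun x hx => by
    have := hϖ.strictMonoOn Set.self_mem_Ici (le_of_lt hx) hx
    rwa [hϖ0] at this
  set C' : ℝ := max C 0 with hC'def
  have hC'0 : 0 ≤ C' := le_max_right _ _
  have hNpos : ∀ a : V, 0 < N a := fun a => lt_of_lt_of_le one_pos (hN1 a)
  have hgal' : ∀ ⦃s t : ℝ⦄, 0 ≤ s → s ≤ t → t ≤ T → ∀ a : V,
      dist (χ t s a) (ψ t s a) ≤ C' * N a * ϖ (ω s t) := by
    intro s t hs hst ht a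
    rw [dist_comm]
    refine le_trans (hgalaxy hs hst ht a) ?_
    have hϖnn : 0 ≤ ϖ (ω s t) := hϖ.nonneg _ (hω.nonneg hs hst ht)
    have : C * N a ≤ C' * N a :=
      mul_le_mul_of_nonneg_right (le_max_left C 0) (hNpos a).le
    exact mul_le_mul_of_nonneg_right this hϖnn
  -- the deviation functional
  set U : ℝ → ℝ → ℝ := fun s t => ⨆ a : V, dist (χ t s a) (ψ t s a) / N a with hUdef
  have hUbddpt : ∀ ⦃s t : ℝ⦄, 0 ≤ s → s ≤ t → t ≤ T → ∀ a : V,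
      dist (χ t s a) (ψ t s a) / N a ≤ C' * ϖ (ω s t) := by
    intro s t hs hst ht a
    rw [div_le_iff₀ (hNpos a)]
    calc dist (χ t s a) (ψ t s a) ≤ C' * N a * ϖ (ω s t) := hgal' hs hst ht a
      _ = C' * ϖ (ω s t) * N a := by ring
  have hUbdd : ∀ ⦃s t : ℝ⦄, 0 ≤ s → s ≤ t → t ≤ T →
      BddAbove (Set.range fun a : V => dist (χ t s a) (ψ t s a) / N a) := by
    intro s t hs hst ht
    exact ⟨C' * ϖ (ω s t), Set.forall_mem_range.2 fun a => hUbddpt hs hst ht a⟩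
  have hUle : ∀ ⦃s t : ℝ⦄, 0 ≤ s → s ≤ t → t ≤ T → U s t ≤ C' * ϖ (ω s t) :=
    fun s t hs hst ht => ciSup_le fun a => hUbddpt hs hst ht a
  have hdistU : ∀ ⦃s t : ℝ⦄, 0 ≤ s → s ≤ t → t ≤ T → ∀ a : V,
      dist (χ t s a) (ψ t s a) ≤ U s t * N a := by
    intro s t hs hst ht a
    have h1 : dist (χ t s a) (ψ t s a) / N a ≤ U s t :=
      le_ciSup (hUbdd hs hst ht) a
    rw [div_le_iff₀ (hNpos a)] at h1
    exact h1
  have hU0 : ∀ ⦃s t : ℝ⦄, 0 ≤ s → s ≤ t → t ≤ T → 0 ≤ U s t := by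
    intro s t hs hst ht
    refine le_trans ?_ (le_ciSup (hUbdd hs hst ht) a₀)
    exact div_nonneg dist_nonneg (hNpos a₀).le
  -- subadditivity-type recursion
  have hrec : ∀ ⦃s u t : ℝ⦄, 0 ≤ s → s ≤ u → u ≤ t → t ≤ T →
      U s t ≤ (1 + δT) * U s u + (1 + δT) * U u t := by
    intro s u t hs hsu hut ht
    refine ciSup_le fun a => ?_
    rw [div_le_iff₀ (hNpos a)]
    have huT : u ≤ T := hut.trans ht
    have hu0 : 0 ≤ u := hs.trans hsu
    have hst : s ≤ t := hsu.trans hut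
    have key : dist (χ t s a) (ψ t s a)
        ≤ U u t * N (χ u s a) + (1 + δT) * dist (χ u s a) (ψ u s a) := by
      calc dist (χ t s a) (ψ t s a)
          = dist (χ t u (χ u s a)) (ψ t u (ψ u s a)) := by
            rw [hχflow hs hsu hut ht a, hψflow hs hsu hut ht a]
        _ ≤ dist (χ t u (χ u s a)) (ψ t u (χ u s a))
            + dist (ψ t u (χ u s a)) (ψ t u (ψ u s a)) := dist_triangle _ _ _
        _ ≤ U u t * N (χ u s a) + (1 + δT) * dist (χ u s a) (ψ u s a) :=
            add_le_add (hdistU hu0 hut ht _) (hψlip hu0 hut ht _ _)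
    have h1 : N (χ u s a) ≤ (1 + δT) * N a := hχN hs hsu huT a
    have h2 : dist (χ u s a) (ψ u s a) ≤ U s u * N a := hdistU hs hsu huT a
    have h3 : U u t * N (χ u s a) ≤ U u t * ((1 + δT) * N a) :=
      mul_le_mul_of_nonneg_left h1 (hU0 hu0 hut ht)
    have h4 : (1 + δT) * dist (χ u s a) (ψ u s a) ≤ (1 + δT) * (U s u * N a) :=
      mul_le_mul_of_nonneg_left h2 (by linarith)
    calc dist (χ t s a) (ψ t s a)
        ≤ U u t * ((1 + δT) * N a) + (1 + δT) * (U s u * N a) := by linarith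
      _ = ((1 + δT) * U s u + (1 + δT) * U u t) * N a := by ring
  -- monotonicity of ω up to the full interval
  have hωfull : ∀ ⦃s t : ℝ⦄, 0 ≤ s → s ≤ t → t ≤ T → ω s t ≤ ω 0 T := by
    intro s t hs hst ht
    have h1 := hω.superadd le_rfl hs hst ht
    have h2 := hω.superadd le_rfl (hs.trans hst) ht le_rfl
    have h3 := hω.nonneg le_rfl hs (hst.trans ht)
    have h4 := hω.nonneg (hs.trans hst) ht le_rfl
    linarith
  -- the set of normalized deviations
  set S : Set ℝ := insert 0 {x | ∃ s t : ℝ, 0 ≤ s ∧ s ≤ t ∧ t ≤ T ∧ 0 < ω s t ∧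
    x = U s t / ϖ (ω s t) ^ lam} with hSdef
  have hSne : S.Nonempty := ⟨0, Set.mem_insert 0 _⟩
  have hB : ∀ x ∈ S, x ≤ C' * ϖ (ω 0 T) ^ (1 - lam) := by
    intro x hx
    have hΩnn : 0 ≤ ω 0 T := hω.nonneg le_rfl hT.le le_rfl
    have hBnn : (0:ℝ) ≤ C' * ϖ (ω 0 T) ^ (1 - lam) := by
      have := hϖ.nonneg _ hΩnn
      positivity
    rcases hx with rfl | ⟨s, t, hs, hst, ht, hωpos, rfl⟩
    · exact hBnn
    · have hp : 0 < ϖ (ω s t) := hϖpos _ hωpos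
      have hplam : 0 < ϖ (ω s t) ^ lam := Real.rpow_pos_of_pos hp lam
      have h1 : U s t / ϖ (ω s t) ^ lam ≤ C' * ϖ (ω s t) / ϖ (ω s t) ^ lam :=
        (div_le_div_iff_of_pos_right hplam).2 (hUle hs hst ht)
      have h2 : C' * ϖ (ω s t) / ϖ (ω s t) ^ lam = C' * ϖ (ω s t) ^ (1 - lam) := by
        rw [Real.rpow_sub hp, Real.rpow_one, mul_div_assoc]
      have h3 : ϖ (ω s t) ^ (1 - lam) ≤ ϖ (ω 0 T) ^ (1 - lam) := by
        apply Real.rpow_le_rpow hp.le ?_ (by linarith)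
        exact hϖmono (Set.mem_Ici.2 (hω.nonneg hs hst ht)) (Set.mem_Ici.2 hΩnn)
          (hωfull hs hst ht)
      calc U s t / ϖ (ω s t) ^ lam ≤ C' * ϖ (ω s t) ^ (1 - lam) := by rw [← h2]; exact h1
        _ ≤ C' * ϖ (ω 0 T) ^ (1 - lam) := mul_le_mul_of_nonneg_left h3 hC'0
  have hSbdd : BddAbove S := ⟨_, hB⟩
  set A : ℝ := sSup S with hAdef
  have hA0 : 0 ≤ A := le_csSup hSbdd (Set.mem_insert 0 _)
  have hUA : ∀ ⦃s t : ℝ⦄, 0 ≤ s → s ≤ t → t ≤ T → U s t ≤ A * ϖ (ω s t) ^ lam := by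
    intro s t hs hst ht
    rcases lt_or_eq_of_le (hω.nonneg hs hst ht) with hωpos | hωz
    · have hp : 0 < ϖ (ω s t) ^ lam := Real.rpow_pos_of_pos (hϖpos _ hωpos) lam
      have hmem : U s t / ϖ (ω s t) ^ lam ∈ S :=
        Set.mem_insert_of_mem _ ⟨s, t, hs, hst, ht, hωpos, rfl⟩
      have := le_csSup hSbdd hmem
      rw [div_le_iff₀ hp] at this
      linarith [this]
    · have h1 : U s t ≤ 0 := by
        have := hUle hs hst ht
        rw [← hωz, hϖ0, mul_zero] at this
        exact this
      have h2 : ϖ (ω s t) ^ lam = 0 := by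
        rw [← hωz, hϖ0, Real.zero_rpow (ne_of_gt hlam0)]
      rw [h2, mul_zero]
      exact h1
  -- splitting an interval into three pieces
  have hsplit : ∀ ⦃s t : ℝ⦄, 0 ≤ s → s < t → t ≤ T → ∀ ε > (0:ℝ),
      ∃ u v, s ≤ u ∧ u ≤ v ∧ v ≤ t ∧ ω s u ≤ ω s t / 2 ∧ ω v t ≤ ω s t / 2 ∧
        ω u v < ε := by
    intro s t hs hst ht ε hε
    obtain ⟨h, hh0, hsmall⟩ := hω.small ε hε
    have hωnn : 0 ≤ ω s t := hω.nonneg hs hst.le ht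
    set W := ω s t with hWdef
    set As : Set ℝ := {u | u ∈ Set.Icc s t ∧ ω s u ≤ W / 2} with hAsdef
    have hsmem : s ∈ As := by
      constructor
      · exact ⟨le_rfl, hst.le⟩
      · rw [hω.diag hs (hst.le.trans ht)]; linarith
    have hAsne : As.Nonempty := ⟨s, hsmem⟩
    have hAsbdd : BddAbove As := ⟨t, fun x hx => hx.1.2⟩
    set m := sSup As with hmdef
    have hsm : s ≤ m := le_csSup hAsbdd hsmem
    have hmt : m ≤ t := csSup_le hAsne fun x hx => hx.1.2
    obtain ⟨u, huA, hum⟩ : ∃ u ∈ As, m - h / 2 < u :=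
      exists_lt_of_lt_csSup hAsne (by linarith)
    have hum' : u ≤ m := le_csSup hAsbdd huA
    obtain ⟨⟨hsu, hut⟩, hωsu⟩ := huA
    have hu0 : 0 ≤ u := hs.trans hsu
    rcases eq_or_lt_of_le hmt with hmeq | hmlt
    · -- m = t : take v = t
      refine ⟨u, t, hsu, hut, le_rfl, hωsu, ?_, ?_⟩
      · rw [hω.diag (hs.trans hst.le) ht]; linarith
      · exact hsmall hu0 hut ht (by linarith [hmeq ▸ hum])
    · -- m < t : take v = min (m + h/2) t
      set v := min (m + h / 2) t with hvdef
      have hmv : m < v := lt_min (by linarith) hmlt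
      have hvt : v ≤ t := min_le_right _ _
      have huv : u ≤ v := hum'.trans hmv.le
      have hsv : s ≤ v := hsu.trans huv
      have hωsv : W / 2 < ω s v := by
        by_contra hcon
        push_neg at hcon
        have : v ∈ As := ⟨⟨hsv, hvt⟩, hcon⟩
        exact absurd (le_csSup hAsbdd this) (not_le.2 hmv)
      have hωvt : ω v t ≤ W / 2 := by
        have hsup := hω.superadd hs hsv hvt ht
        linarith
      refine ⟨u, v, hsu, huv, hvt, hωsu, hωvt, ?_⟩
      have hvub : v ≤ m + h / 2 := min_le_left _ _
      exact hsmall hu0 huv (hvt.trans ht) (by linarith)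
  -- the contraction factor
  set θ : ℝ := (1 + δT) * (2 + δT) * (κ / 2) ^ lam with hθdef
  have h2lam : (0:ℝ) < 2 ^ lam := Real.rpow_pos_of_pos two_pos lam
  have hκ2 : (κ / 2 : ℝ) ^ lam = κ ^ lam / 2 ^ lam :=
    Real.div_rpow hκ0.le two_pos.le lam
  have hθnn : 0 ≤ θ := by
    rw [hθdef]
    exact mul_nonneg (mul_nonneg (by linarith) (by linarith))
      (Real.rpow_nonneg (by linarith) lam)
  have hθ1 : θ < 1 := by
    have h21 : (2:ℝ) ^ (1 - lam) = 2 / 2 ^ lam := by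
      rw [Real.rpow_sub two_pos, Real.rpow_one]
    have hkey : κ ^ lam * ((1 + δT) * (2 + δT)) < 2 ^ lam := by
      have h' := hlam3
      rw [h21] at h'
      have h'' := mul_lt_mul_of_pos_right h' h2lam
      have heq : 2 / 2 ^ lam * κ ^ lam * (2 + 3 * δT + δT ^ 2) * 2 ^ lam
          = 2 * (κ ^ lam * ((1 + δT) * (2 + δT))) := by
        field_simp
        ring
      rw [heq] at h''
      linarith
    have heq2 : θ = κ ^ lam * ((1 + δT) * (2 + δT)) / 2 ^ lam := by
      rw [hθdef, hκ2]; ring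
    rw [heq2, div_lt_one h2lam]
    exact hkey
  -- the contraction estimate
  have hcontr : ∀ ⦃s t : ℝ⦄, 0 ≤ s → s < t → t ≤ T →
      U s t ≤ θ * A * ϖ (ω s t) ^ lam := by
    intro s t hs hst ht
    refine le_of_forall_pos_le_add fun ε₀ hε₀ => ?_
    -- choose ε so that the middle term is small
    set K : ℝ := (1 + δT) ^ 2 * C' with hKdef
    have hK0 : 0 ≤ K := by positivity
    obtain ⟨ε, hε, hϖε⟩ := hϖsmall (ε₀ / (K + 1)) (by positivity)
    obtain ⟨u, v, hsu, huv, hvt, hωsu, hωvt, hωuv⟩ := hsplit hs hst ht ε hε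
    have hu0 : 0 ≤ u := hs.trans hsu
    have hv0 : 0 ≤ v := hu0.trans huv
    have hut : u ≤ t := huv.trans hvt
    have huT : u ≤ T := hut.trans ht
    have hvT : v ≤ T := hvt.trans ht
    set W := ω s t with hWdef
    have hWnn : 0 ≤ W := hω.nonneg hs hst.le ht
    have hϖW : 0 ≤ ϖ W := hϖ.nonneg _ hWnn
    -- bound on halves via the doubling property
    have hhalf : ∀ x : ℝ, 0 ≤ x → x ≤ W / 2 → ϖ x ^ lam ≤ (κ / 2) ^ lam * ϖ W ^ lam := by
      intro x hx hxW
      rcases eq_or_lt_of_le hWnn with hW0 | hW0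
      · have hx0 : x = 0 := le_antisymm (by linarith) hx
        rw [hx0, hϖ0, Real.zero_rpow (ne_of_gt hlam0)]
        positivity
      · have hd := hϖ.doubling W hW0
        have h1 : ϖ x ≤ ϖ (W / 2) :=
          hϖmono (Set.mem_Ici.2 hx) (Set.mem_Ici.2 (by linarith)) hxW
        have h2 : ϖ (W / 2) ≤ κ / 2 * ϖ W := by linarith
        have h3 : ϖ x ≤ κ / 2 * ϖ W := h1.trans h2
        calc ϖ x ^ lam ≤ (κ / 2 * ϖ W) ^ lam :=
              Real.rpow_le_rpow (hϖ.nonneg _ hx) h3 hlam0.le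
          _ = (κ / 2) ^ lam * ϖ W ^ lam := Real.mul_rpow (by linarith) hϖW
    have hUsu : U s u ≤ A * ((κ / 2) ^ lam * ϖ W ^ lam) := by
      refine (hUA hs hsu huT).trans ?_
      exact mul_le_mul_of_nonneg_left
        (hhalf _ (hω.nonneg hs hsu huT) hωsu) hA0
    have hUvt : U v t ≤ A * ((κ / 2) ^ lam * ϖ W ^ lam) := by
      refine (hUA hv0 hvt ht).trans ?_
      exact mul_le_mul_of_nonneg_left
        (hhalf _ (hω.nonneg hv0 hvt ht) hωvt) hA0
    have hUuv : U u v ≤ C' * ϖ ε := by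
      refine (hUle hu0 huv hvT).trans ?_
      refine mul_le_mul_of_nonneg_left ?_ hC'0
      exact hϖmono (Set.mem_Ici.2 (hω.nonneg hu0 huv hvT)) (Set.mem_Ici.2 hε.le)
        hωuv.le
    have hmid : K * ϖ ε ≤ ε₀ := by
      have hϖεnn : 0 ≤ ϖ ε := hϖ.nonneg _ hε.le
      have h1 : K * ϖ ε ≤ K * (ε₀ / (K + 1)) :=
        mul_le_mul_of_nonneg_left hϖε.le hK0
      have hx : 0 ≤ ε₀ / (K + 1) := by positivity
      have h3 : K * (ε₀ / (K + 1)) ≤ (K + 1) * (ε₀ / (K + 1)) :=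
        mul_le_mul_of_nonneg_right (by linarith) hx
      have h4 : (K + 1) * (ε₀ / (K + 1)) = ε₀ := by field_simp
      linarith
    -- assemble
    have step1 : U s t ≤ (1 + δT) * U s u + (1 + δT) * U u t :=
      hrec hs hsu hut ht
    have step2 : U u t ≤ (1 + δT) * U u v + (1 + δT) * U v t :=
      hrec hu0 huv hvt ht
    have h1δ : (0:ℝ) ≤ 1 + δT := by linarith
    have hq : (0:ℝ) ≤ A * ((κ / 2) ^ lam * ϖ W ^ lam) := by
      have : (0:ℝ) ≤ (κ / 2) ^ lam := Real.rpow_nonneg (by linarith) lam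
      have : (0:ℝ) ≤ ϖ W ^ lam := Real.rpow_nonneg hϖW lam
      positivity
    have final : U s t ≤ θ * A * ϖ W ^ lam + K * ϖ ε := by
      calc U s t ≤ (1 + δT) * U s u + (1 + δT) * U u t := step1
        _ ≤ (1 + δT) * (A * ((κ / 2) ^ lam * ϖ W ^ lam))
            + (1 + δT) * ((1 + δT) * (C' * ϖ ε)
              + (1 + δT) * (A * ((κ / 2) ^ lam * ϖ W ^ lam))) := by
            refine add_le_add (mul_le_mul_of_nonneg_left hUsu h1δ) ?_
            refine (mul_le_mul_of_nonneg_left step2 h1δ).trans ?_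
            refine mul_le_mul_of_nonneg_left ?_ h1δ
            exact add_le_add (mul_le_mul_of_nonneg_left hUuv h1δ)
              (mul_le_mul_of_nonneg_left hUvt h1δ)
        _ = θ * A * ϖ W ^ lam + K * ϖ ε := by rw [hθdef, hKdef]; ring
    linarith
  -- A is a fixed point below θ·A, hence A = 0
  have hAcontr : A ≤ θ * A := by
    refine csSup_le hSne fun x hx => ?_
    rcases hx with rfl | ⟨s, t, hs, hst, ht, hωpos, rfl⟩
    · exact mul_nonneg hθnn hA0
    · have hslt : s < t := by
        rcases eq_or_lt_of_le hst with rfl | h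
        · rw [hω.diag hs ht] at hωpos; exact absurd hωpos (lt_irrefl 0)
        · exact h
      have hp : 0 < ϖ (ω s t) ^ lam := Real.rpow_pos_of_pos (hϖpos _ hωpos) lam
      rw [div_le_iff₀ hp]
      exact hcontr hs hslt ht
  have hAzero : A = 0 := by
    rcases eq_or_lt_of_le hA0 with h | h
    · exact h.symm
    · exfalso
      have h2 : θ * A < 1 * A := mul_lt_mul_of_pos_right hθ1 h
      rw [one_mul] at h2
      linarith
  -- conclusion
  have hfin : dist (χ t₀ s₀ a₀) (ψ t₀ s₀ a₀) ≤ 0 := by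
    have h1 : U s₀ t₀ ≤ 0 := by
      have := hUA hs₀ hst₀ ht₀
      rw [hAzero, zero_mul] at this
      exact this
    have h2 := hdistU hs₀ hst₀ ht₀ a₀
    have h3 := mul_le_mul_of_nonneg_right h1 (hNpos a₀).le
    rw [zero_mul] at h3
    linarith
  exact dist_le_zero.1 hfin

end
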